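/- arXiv:1908.05404 — 4 statements merged into one kernel-verified Lean document; each statement's English description precedes it below -/
import Mathlib

section
/- Let m ≥ 2 be an integer and define λ_m(n) = ∑_{d : d^m ∣ n} μ(n/d^m). If a positive integer n is written as n = k^m · l where k, l ≥ 1 and l is m-th power-free (i.e., l has no divisor of the form d^m with d > 1), then λ_m(n) = μ(l). -/
open Finset ArithmeticFunction

/-- `lambdaM m n = ∑_{d : d^m ∣ n} μ(n / d^m)`. -/
def lambdaM (m n : ℕ) : ℤ :=
  ∑ d ∈ n.divisors.filter (fun d => d ^ m ∣ n), moebius (n / d ^ m)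

theorem lambdaM_eq_moebius_powerfreePart (m : ℕ) (hm : 2 ≤ m) (k l : ℕ)
    (hk : 1 ≤ k) (hl : 1 ≤ l) (hfree : ∀ d : ℕ, 1 < d → ¬ d ^ m ∣ l) :
    lambdaM m (k ^ m * l) = moebius l := by
  have hm0 : m ≠ 0 := by omega
  have hk0 : k ≠ 0 := by omega
  have hl0 : l ≠ 0 := by omega
  have hn0 : k ^ m * l ≠ 0 := by positivity
  -- any d with d^m ∣ n divides k
  have hdvdk : ∀ d : ℕ, d ^ m ∣ k ^ m * l → d ∣ k := by
    intro d hd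
    have hd0 : d ≠ 0 := by
      rintro rfl
      rw [zero_pow hm0] at hd
      exact hn0 (Nat.eq_zero_of_zero_dvd hd)
    rw [← Nat.factorization_le_iff_dvd hd0 hk0]
    intro p
    by_cases hp : p.Prime
    · have hlp : l.factorization p < m := by
        by_contra hge
        push_neg at hge
        exact hfree p hp.one_lt ((Nat.Prime.pow_dvd_iff_le_factorization hp hl0).mpr hge)
      have := (Nat.factorization_le_iff_dvd (pow_ne_zero m hd0) hn0).mpr hd
      have h2 := this p
      rw [Nat.factorization_mul (pow_ne_zero m hk0) hl0, Nat.factorization_pow,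
        Nat.factorization_pow] at h2
      simp only [Finsupp.coe_add, Finsupp.coe_smul, Pi.add_apply, Pi.smul_apply,
        smul_eq_mul] at h2
      -- m * d.f p ≤ m * k.f p + l.f p < m * (k.f p + 1)
      by_contra hgt
      push_neg at hgt
      have h3 : m * k.factorization p + m ≤ m * d.factorization p := by
        have := Nat.mul_le_mul_left m hgt
        rwa [Nat.mul_succ] at this
      omega
    · simp [Nat.factorization_eq_zero_of_not_prime _ hp]
  unfold lambdaM
  rw [Finset.sum_eq_single k]
  · rw [Nat.mul_div_cancel_left l (by positivity : 0 < k ^ m)]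
  · intro d hd hne
    simp only [Finset.mem_filter, Nat.mem_divisors] at hd
    obtain ⟨⟨hdn, _⟩, hdm⟩ := hd
    have hdk : d ∣ k := hdvdk d hdm
    have hq : k / d ≠ 1 := by
      intro h1
      exact hne (by rw [← Nat.div_mul_cancel hdk, h1, one_mul])
    have hd0 : d ≠ 0 := by
      rintro rfl; rw [zero_pow hm0] at hdm; exact hn0 (Nat.eq_zero_of_zero_dvd hdm)
    have hquot : k ^ m * l / d ^ m = (k / d) ^ m * l := by
      rw [Nat.div_pow hdk, mul_comm (k ^ m) l,
        Nat.mul_div_assoc l (pow_dvd_pow_of_dvd hdk m), mul_comm l _]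
    rw [hquot]
    apply moebius_eq_zero_of_not_squarefree
    intro hsq
    have : Squarefree ((k / d) ^ m) := hsq.squarefree_of_dvd (Dvd.intro l rfl)
    rw [Nat.squarefree_pow_iff hq hm0] at this
    omega
  · intro hk'
    exfalso
    apply hk'
    simp only [Finset.mem_filter, Nat.mem_divisors]
    exact ⟨⟨dvd_mul_of_dvd_left (dvd_pow_self k hm0) l, hn0⟩, dvd_mul_right _ _⟩
end

section
/- Let m ≥ 2 be an integer and define λ_m(n) = ∑_{d : d^m ∣ n} μ(n/d^m). Then the partial sums ∑_{n ≤ x} μ(n)/n tend to 0 as x → ∞ if and only if the partial sums ∑_{n ≤ x} λ_m(n)/n tend to 0 as x → ∞. -/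
open Finset ArithmeticFunction Filter

/-!
`λ_m = 1_m * μ` for the indicator `1_m` of `m`-th powers, and `1_m` has the Dirichlet inverse
`d ^ m ↦ μ d`. Weighted by `1 / n`, both `1_m` and its inverse are absolutely summable since
`m ≥ 2`, and convolution with an absolutely summable `f` preserves partial sums tending to `0`:
`∑_{n ≤ N} (f * g) n = ∑_{n ≤ N} f n G (N / n)` with `G` the partial sums of `g`, which tends to
`0` by dominated convergence.
-/

open scoped Topology

namespace ArithmeticFunction

section Expand

variable {R : Type*} [Semiring R] {m : ℕ}

-- `f` moved onto the `m`-th powers, `d ^ m ↦ f d`: the Dirichlet series becomes `s ↦ F (m s)`,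
-- as for `Polynomial.expand`.
def expand (m : ℕ) (f : ArithmeticFunction R) : ArithmeticFunction R :=
  ⟨fun n => ∑ d ∈ n.divisors with d ^ m = n, f d, by simp⟩

theorem expand_apply (f : ArithmeticFunction R) (n : ℕ) :
    expand m f n = ∑ d ∈ n.divisors with d ^ m = n, f d := rfl

theorem expand_apply_pow (hm : m ≠ 0) (f : ArithmeticFunction R) (d : ℕ) :
    expand m f (d ^ m) = f d := by
  rcases eq_or_ne d 0 with rfl | hd
  · simp [zero_pow hm]
  · have : {e ∈ (d ^ m).divisors | e ^ m = d ^ m} = {d} := by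
      ext e
      simp only [mem_filter, Nat.mem_divisors, (Nat.pow_left_injective hm).eq_iff, mem_singleton]
      exact ⟨fun h => h.2, fun h => ⟨⟨h ▸ dvd_pow_self d hm, pow_ne_zero m hd⟩, h⟩⟩
    rw [expand_apply, this, sum_singleton]

theorem expand_apply_eq_zero {f : ArithmeticFunction R} {n : ℕ} (hn : ¬∃ d, d ^ m = n) :
    expand m f n = 0 := by
  rw [expand_apply]
  exact sum_eq_zero fun d hd => absurd ⟨d, (mem_filter.1 hd).2⟩ hn

theorem exists_pow_eq_of_expand_apply_ne_zero {f : ArithmeticFunction R} {n : ℕ}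
    (h : expand m f n ≠ 0) : ∃ d, d ^ m = n := by
  by_contra hn
  exact h (expand_apply_eq_zero hn)

theorem expand_one (hm : m ≠ 0) : expand m (1 : ArithmeticFunction R) = 1 := by
  ext n
  by_cases hn : ∃ d, d ^ m = n
  · obtain ⟨d, rfl⟩ := hn
    simp only [expand_apply_pow hm, one_apply, Nat.pow_eq_one, hm, or_false]
  · rw [one_apply_ne fun h => hn ⟨1, by rw [h, one_pow]⟩]
    exact expand_apply_eq_zero hn

theorem expand_mul (hm : m ≠ 0) (f g : ArithmeticFunction R) :
    expand m (f * g) = expand m f * expand m g := by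
  ext n
  rw [mul_apply]
  by_cases hn : ∃ c, c ^ m = n
  · obtain ⟨c, rfl⟩ := hn
    rw [expand_apply_pow hm, mul_apply]
    refine sum_bij_ne_zero (fun x _ _ => (x.1 ^ m, x.2 ^ m)) ?_ ?_ ?_ ?_
    · intro x hx _
      rw [Nat.mem_divisorsAntidiagonal] at hx ⊢
      exact ⟨by rw [← mul_pow, hx.1], pow_ne_zero m hx.2⟩
    · intro x _ _ y _ _ hxy
      simp only [Prod.mk.injEq, (Nat.pow_left_injective hm).eq_iff] at hxy
      exact Prod.ext hxy.1 hxy.2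
    · intro y hy hne
      obtain ⟨d, hd⟩ := exists_pow_eq_of_expand_apply_ne_zero (left_ne_zero_of_mul hne)
      obtain ⟨e, he⟩ := exists_pow_eq_of_expand_apply_ne_zero (right_ne_zero_of_mul hne)
      rw [Nat.mem_divisorsAntidiagonal, ← hd, ← he, ← mul_pow,
        (Nat.pow_left_injective hm).eq_iff] at hy
      refine ⟨(d, e), Nat.mem_divisorsAntidiagonal.2 ⟨hy.1, ?_⟩, ?_, by rw [hd, he]⟩
      · rintro rfl
        exact hy.2 (zero_pow hm)
      · rwa [← hd, ← he, expand_apply_pow hm, expand_apply_pow hm] at hne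
    · intro x _ _
      rw [expand_apply_pow hm, expand_apply_pow hm]
  · rw [expand_apply_eq_zero hn]
    refine (sum_eq_zero fun y hy => ?_).symm
    by_contra hne
    obtain ⟨d, hd⟩ := exists_pow_eq_of_expand_apply_ne_zero (left_ne_zero_of_mul hne)
    obtain ⟨e, he⟩ := exists_pow_eq_of_expand_apply_ne_zero (right_ne_zero_of_mul hne)
    exact hn ⟨d * e, by rw [mul_pow, hd, he, (Nat.mem_divisorsAntidiagonal.1 hy).1]⟩

theorem expand_mul_apply (hm : m ≠ 0) (f g : ArithmeticFunction R) (n : ℕ) :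
    (expand m f * g) n = ∑ d ∈ n.divisors with d ^ m ∣ n, f d * g (n / d ^ m) := by
  rw [mul_apply, Nat.sum_divisorsAntidiagonal (fun a b => expand m f a * g b)]
  simp only [expand_apply, sum_mul]
  rw [sum_comm' (t' := {d ∈ n.divisors | d ^ m ∣ n}) (s' := fun d => {d ^ m})]
  · simp only [sum_singleton]
  · intro a d
    simp only [mem_filter, Nat.mem_divisors, mem_singleton]
    constructor
    · rintro ⟨⟨ha, hn⟩, -, rfl⟩
      exact ⟨rfl, ⟨(dvd_pow_self d hm).trans ha, hn⟩, ha⟩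
    · rintro ⟨rfl, ⟨-, hn⟩, ha⟩
      exact ⟨⟨ha, hn⟩, ⟨dvd_pow_self d hm, fun h => hn (Nat.eq_zero_of_zero_dvd (h ▸ ha))⟩, rfl⟩

theorem summable_norm_expand_div {f : ArithmeticFunction ℝ} (hm : 1 < m) (hf : ∀ n, ‖f n‖ ≤ 1) :
    Summable fun n : ℕ => ‖expand m f n / n‖ := by
  have hm0 : m ≠ 0 := by omega
  rw [← (Nat.pow_left_injective hm0).summable_iff fun n hn => by simp [expand_apply_eq_zero hn]]
  refine (Real.summable_one_div_nat_pow.2 hm).of_nonneg_of_le (fun _ => norm_nonneg _) fun d => ?_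
  simp only [Function.comp_apply, expand_apply_pow hm0, Nat.cast_pow, norm_div,
    Real.norm_natCast]
  exact div_le_div_of_nonneg_right (hf d) (by positivity)

end Expand

theorem pdiv_mul_of_map_mul {R : Type*} [Semifield R] (f g w : ArithmeticFunction R)
    (hw : ∀ a b, w (a * b) = w a * w b) : (f * g).pdiv w = f.pdiv w * g.pdiv w := by
  ext n
  simp only [pdiv_apply, mul_apply, sum_div]
  refine sum_congr rfl fun x hx => ?_
  rw [← (Nat.mem_divisorsAntidiagonal.1 hx).1, hw, mul_div_mul_comm]

theorem tendsto_sum_Ioc_mul_of_summable_norm {R : Type*} [NormedRing R] [CompleteSpace R]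
    {f g : ArithmeticFunction R} (hf : Summable fun n => ‖f n‖)
    (hg : Tendsto (fun N => ∑ n ∈ Ioc 0 N, g n) atTop (𝓝 0)) :
    Tendsto (fun N => ∑ n ∈ Ioc 0 N, (f * g) n) atTop (𝓝 0) := by
  set G := fun N => ∑ n ∈ Ioc 0 N, g n
  obtain ⟨B, hB⟩ := hg.norm.bddAbove_range
  have hsum (N : ℕ) : ∑ n ∈ Ioc 0 N, (f * g) n = ∑' n, f n * G (N / n) := by
    rw [sum_Ioc_mul_eq_sum_sum, tsum_eq_sum fun n hn => ?_]
    -- `f 0 = 0`, and for `n > N` the inner sum is empty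
    rcases eq_or_ne n 0 with rfl | hn0
    · simp
    · rw [Nat.div_eq_of_lt (by simp only [mem_Ioc, not_and, not_le] at hn; omega)]
      simp [G]
  simp_rw [hsum]
  have hlim (n : ℕ) : Tendsto (fun N => f n * G (N / n)) atTop (𝓝 0) := by
    rcases eq_or_ne n 0 with rfl | hn
    · simp
    · simpa using (hg.comp (Nat.tendsto_div_const_atTop hn)).const_mul (f n)
  simpa using tendsto_tsum_of_dominated_convergence (hf.mul_right B) hlim
    (Eventually.of_forall fun N n => (norm_mul_le _ _).trans
      (mul_le_mul_of_nonneg_left (hB ⟨N / n, rfl⟩) (norm_nonneg _)))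

theorem tendsto_sum_Icc_mul_div_of_summable {f g : ArithmeticFunction ℝ}
    (hf : Summable fun n => ‖f n / n‖)
    (hg : Tendsto (fun N => ∑ n ∈ Icc 1 N, g n / n) atTop (𝓝 0)) :
    Tendsto (fun N => ∑ n ∈ Icc 1 N, (f * g) n / n) atTop (𝓝 0) := by
  have hdiv (h : ArithmeticFunction ℝ) (n : ℕ) : h.pdiv ↑ArithmeticFunction.id n = h n / n := by
    simp [pdiv_apply]
  simp only [← hdiv, show ∀ N, Icc 1 N = Ioc 0 N from fun N => Icc_succ_left_eq_Ioc 0 N]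
    at hf hg ⊢
  rw [pdiv_mul_of_map_mul _ _ _ fun a b => by simp]
  exact tendsto_sum_Ioc_mul_of_summable_norm hf hg

end ArithmeticFunction

theorem lambdaM_eq_expand_zeta_mul_moebius {m : ℕ} (hm : m ≠ 0) (n : ℕ) :
    (lambdaM m n : ℝ) = (expand m (zeta : ArithmeticFunction ℝ) * moebius) n := by
  rw [expand_mul_apply hm, lambdaM, Int.cast_sum]
  refine sum_congr rfl fun d hd => ?_
  rw [natCoe_apply, zeta_apply_ne (Nat.pos_of_mem_divisors (mem_filter.1 hd).1).ne',
    intCoe_apply, Nat.cast_one, one_mul]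

theorem moebius_sum_tendsto_zero_iff_lambdaM (m : ℕ) (hm : 2 ≤ m) :
    Tendsto (fun x : ℕ => ∑ n ∈ Finset.Icc 1 x, (moebius n : ℝ) / n) atTop (nhds 0) ↔
      Tendsto (fun x : ℕ => ∑ n ∈ Finset.Icc 1 x, (lambdaM m n : ℝ) / n) atTop (nhds 0) := by
  have hm0 : m ≠ 0 := by omega
  have hζ (n : ℕ) : ‖(zeta : ArithmeticFunction ℝ) n‖ ≤ 1 := by
    rw [natCoe_apply, zeta_apply]
    split_ifs <;> simp
  have hμ (n : ℕ) : ‖(moebius : ArithmeticFunction ℝ) n‖ ≤ 1 := by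
    rw [intCoe_apply, Real.norm_eq_abs, ← Int.cast_abs]
    exact_mod_cast abs_moebius_le_one
  have hinv : (moebius : ArithmeticFunction ℝ) = expand m (moebius : ArithmeticFunction ℝ) *
      (expand m (zeta : ArithmeticFunction ℝ) * moebius) := by
    rw [← mul_assoc, ← expand_mul hm0, coe_moebius_mul_coe_zeta, expand_one hm0, one_mul]
  simp only [lambdaM_eq_expand_zeta_mul_moebius hm0, ← intCoe_apply]
  constructor
  · exact tendsto_sum_Icc_mul_div_of_summable (summable_norm_expand_div hm hζ)
  · intro h
    rw [hinv]
    exact tendsto_sum_Icc_mul_div_of_summable (summable_norm_expand_div hm hμ) h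
end

section
/- (Duality Lemma) Let m ≥ 2 be an integer and define λ_m(n) = ∑_{d : d^m ∣ n} μ(n/d^m). For a positive integer n > 1, let p(n) denote the smallest prime divisor of n, with the convention p(1) = 1, and let P_m(n) denote the largest prime p dividing n whose exponent in the prime factorization of n is not divisible by m, with the convention P_m(n) = 1 when n is a perfect m-th power. Then for any function f on the positive integers with f(1) = 0 and any positive integer n, ∑_{d ∣ n} λ_m(d) · f(p(d)) = −f(P_m(n)). -/
open Finset ArithmeticFunction

/-- `Pm m n` is the largest prime factor of `n` whose multiplicity in `n` is not divisible
by `m`, with `Pm m n = 1` if there is no such prime (e.g. if `n` is a perfect `m`-th power). -/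

def Pm (m n : ℕ) : ℕ :=
  WithBot.unbotD 1 ((n.primeFactors.filter (fun p => ¬ m ∣ n.factorization p)).max)

/-! `λ_m` is the Dirichlet convolution of `μ` with the indicator `χ_m` (`powerIndicator m`) of the
`m`-th powers, so it is multiplicative and `∑_{d ∣ n} λ_m(d) = χ_m(n)`. Write `n = p^a n'` with
`p = p(n)`. A divisor of `n` is `p^i y` with `y ∣ n'`; for `i ≥ 1` its smallest prime factor is
`p`, so these divisors contribute `(χ_m(p^a) - 1) χ_m(n') f(p)`, while `i = 0` gives the sum for
`n'`, which is `-f(P_m(n'))` by induction. On the other side `P_m(n) = max(P_m(p^a), P_m(n'))`,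
where `P_m(p^a) ∈ {1, p}` and `P_m(n')` is either `1` (exactly when `χ_m(n') = 1`) or a prime
above `p`. -/

theorem Nat.exists_pow_eq_iff_dvd_factorization {m n : ℕ} (hm : m ≠ 0) (hn : n ≠ 0) :
    (∃ k, k ^ m = n) ↔ ∀ p, m ∣ n.factorization p := by
  refine ⟨fun ⟨k, hk⟩ p => ?_, fun h => ⟨Nat.floorRoot m n, ?_⟩⟩
  · simp [← hk]
  · refine Nat.eq_of_factorization_eq (by simp [hm, hn]) hn fun p => ?_
    simpa using Nat.mul_div_cancel' (h p)

theorem Nat.Coprime.factorization_eq_zero_or {a b : ℕ} (hab : a.Coprime b) (p : ℕ) :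
    a.factorization p = 0 ∨ b.factorization p = 0 := by
  by_contra! h
  have hp : p.Prime := Nat.prime_of_mem_primeFactors (Finsupp.mem_support_iff.2 h.1)
  exact hp.ne_one <| Nat.eq_one_of_dvd_coprimes hab
    (Nat.dvd_of_factorization_pos h.1) (Nat.dvd_of_factorization_pos h.2)

theorem Nat.Coprime.dvd_factorization_mul_iff {m a b : ℕ} (hab : a.Coprime b) :
    (∀ p, m ∣ (a * b).factorization p) ↔
      (∀ p, m ∣ a.factorization p) ∧ ∀ p, m ∣ b.factorization p := by
  simp only [Nat.factorization_mul_of_coprime hab, Finsupp.add_apply]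
  refine ⟨fun h => ⟨fun p => ?_, fun p => ?_⟩, fun h p => dvd_add (h.1 p) (h.2 p)⟩ <;>
    rcases hab.factorization_eq_zero_or p with h0 | h0 <;> have := h p <;> simp_all

theorem Nat.Prime.coprime_of_lt_of_dvd {p n : ℕ} (hp : p.Prime)
    (hpn : ∀ q, q.Prime → q ∣ n → p < q) : p.Coprime n :=
  hp.coprime_iff_not_dvd.2 fun h => (hpn p hp h).false

theorem Nat.Coprime.sum_divisors_mul_eq {M : Type*} [AddCommMonoid M] {a b : ℕ}
    (hab : a.Coprime b) (g : ℕ → M) :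
    ∑ d ∈ (a * b).divisors, g d = ∑ x ∈ a.divisors, ∑ y ∈ b.divisors, g (x * y) := by
  rw [hab.divisors_mul, sum_map]
  exact (sum_attach _ fun x => g (x.1 * x.2)).trans (sum_product _ _ _)

theorem Nat.minFac_prime_pow_mul {p i y : ℕ} (hp : p.Prime) (hi : i ≠ 0)
    (hy : ∀ q, q.Prime → q ∣ y → p ≤ q) : (p ^ i * y).minFac = p := by
  have hne : p ^ i * y ≠ 1 := fun h =>
    hp.ne_one (by simpa [hi] using Nat.eq_one_of_mul_eq_one_right h)
  refine le_antisymm (Nat.minFac_le_of_dvd hp.two_le (Dvd.dvd.mul_right (dvd_pow_self p hi) y)) ?_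
  refine (Nat.le_minFac.2 fun q hq hqd => ?_).resolve_left hne
  rcases (Nat.Prime.dvd_mul hq).1 hqd with h | h
  · exact ((Nat.prime_dvd_prime_iff_eq hq hp).1 (hq.dvd_of_dvd_pow h)).ge
  · exact hy q hq h

theorem Nat.exists_prime_pow_mul_of_one_lt {n : ℕ} (hn : 1 < n) :
    ∃ p a n', p.Prime ∧ p ^ a * n' = n ∧ n' < n ∧ ∀ q, q.Prime → q ∣ n' → p < q := by
  have hp : n.minFac.Prime := Nat.minFac_prime hn.ne'
  have hn0 : n ≠ 0 := by omega
  have hpn' := Nat.not_dvd_ordCompl hp hn0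
  refine ⟨n.minFac, _, _, hp, Nat.ordProj_mul_ordCompl_eq_self n _, ?_, fun q hq hqd => ?_⟩
  · exact lt_of_le_of_ne (Nat.le_of_dvd (by omega) (Nat.ordCompl_dvd n _))
      fun h => hpn' (h.symm ▸ Nat.minFac_dvd n)
  · exact lt_of_le_of_ne (Nat.minFac_le_of_dvd hq.two_le (hqd.trans (Nat.ordCompl_dvd n _)))
      fun h => hpn' (h ▸ hqd)

open Classical in
noncomputable def powerIndicator (m : ℕ) : ArithmeticFunction ℤ :=
  ⟨fun n => if n ≠ 0 ∧ ∀ p, m ∣ n.factorization p then 1 else 0, by simp⟩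

open Classical in
theorem powerIndicator_apply (m n : ℕ) :
    powerIndicator m n = if n ≠ 0 ∧ ∀ p, m ∣ n.factorization p then 1 else 0 := rfl

theorem isMultiplicative_powerIndicator (m : ℕ) : (powerIndicator m).IsMultiplicative := by
  refine ⟨by simp [powerIndicator_apply], fun {a b} hab => ?_⟩
  have key : (a * b ≠ 0 ∧ ∀ p, m ∣ (a * b).factorization p) ↔
      (a ≠ 0 ∧ ∀ p, m ∣ a.factorization p) ∧ (b ≠ 0 ∧ ∀ p, m ∣ b.factorization p) := by
    rw [mul_ne_zero_iff, hab.dvd_factorization_mul_iff]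
    tauto
  simp only [powerIndicator_apply, key]
  split_ifs <;> simp_all

theorem powerIndicator_prime_pow (m : ℕ) {p : ℕ} (hp : p.Prime) (a : ℕ) :
    powerIndicator m (p ^ a) = if m ∣ a then 1 else 0 := by
  have : (∀ q, m ∣ (p ^ a).factorization q) ↔ m ∣ a := by
    simp only [hp.factorization_pow, Finsupp.single_apply]
    exact ⟨fun h => by simpa using h p, fun h q => by split_ifs <;> simp [h]⟩
  simp only [powerIndicator_apply, this, ne_eq, pow_eq_zero_iff', hp.ne_zero, false_and,
    not_false_eq_true, true_and]

theorem lambdaM_eq_powerIndicator_mul_moebius {m : ℕ} (hm : m ≠ 0) (n : ℕ) :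
    lambdaM m n = (powerIndicator m * moebius) n := by
  classical
  rcases eq_or_ne n 0 with rfl | hn
  · simp [lambdaM]
  have hpowers : (n.divisors.filter (fun d => d ^ m ∣ n)).image (· ^ m) =
      n.divisors.filter (fun i => ∀ p, m ∣ i.factorization p) := by
    ext i
    simp only [mem_image, mem_filter, Nat.mem_divisors]
    constructor
    · rintro ⟨d, ⟨-, hd⟩, rfl⟩
      exact ⟨⟨hd, hn⟩, fun p => by simp⟩
    · rintro ⟨⟨hi, -⟩, hfac⟩
      obtain ⟨d, rfl⟩ :=
        (Nat.exists_pow_eq_iff_dvd_factorization hm (ne_zero_of_dvd_ne_zero hn hi)).2 hfac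
      exact ⟨d, ⟨⟨(dvd_pow_self d hm).trans hi, hn⟩, hi⟩, rfl⟩
  rw [mul_apply, Nat.sum_divisorsAntidiagonal (fun a b => powerIndicator m a * moebius b), lambdaM,
    ← sum_image (f := fun i => moebius (n / i)) (Nat.pow_left_injective hm).injOn, hpowers,
    sum_filter]
  refine sum_congr rfl fun i hi => ?_
  simp [powerIndicator_apply, (Nat.pos_of_mem_divisors hi).ne']

theorem lambdaM_one (m : ℕ) : lambdaM m 1 = 1 := by
  rw [lambdaM, Nat.divisors_one, filter_singleton]
  simp

theorem lambdaM_mul_of_coprime {m : ℕ} (hm : m ≠ 0) {a b : ℕ} (hab : a.Coprime b) :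
    lambdaM m (a * b) = lambdaM m a * lambdaM m b := by
  simp only [lambdaM_eq_powerIndicator_mul_moebius hm]
  exact ((isMultiplicative_powerIndicator m).mul isMultiplicative_moebius).map_mul_of_coprime hab

theorem sum_divisors_lambdaM {m : ℕ} (hm : m ≠ 0) (n : ℕ) :
    ∑ d ∈ n.divisors, lambdaM m d = powerIndicator m n := by
  simp only [lambdaM_eq_powerIndicator_mul_moebius hm, ← coe_mul_zeta_apply, mul_assoc,
    moebius_mul_coe_zeta, mul_one]

theorem sum_range_lambdaM_prime_pow_succ {m : ℕ} (hm : m ≠ 0) {p : ℕ} (hp : p.Prime) (a : ℕ) :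
    ∑ i ∈ range a, lambdaM m (p ^ (i + 1)) = powerIndicator m (p ^ a) - 1 := by
  rw [← sum_divisors_lambdaM hm, Nat.sum_divisors_prime_pow hp, sum_range_succ', pow_zero,
    lambdaM_one, add_sub_cancel_right]

theorem sum_divisors_lambdaM_mul_minFac_prime_pow_mul {R : Type*} [CommRing R] {m : ℕ}
    (hm : m ≠ 0) (f : ℕ → R) {p n : ℕ} (hp : p.Prime) (hpn : ∀ q, q.Prime → q ∣ n → p < q)
    (a : ℕ) :
    ∑ d ∈ (p ^ a * n).divisors, (lambdaM m d : R) * f d.minFac =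
      ((powerIndicator m (p ^ a) : R) - 1) * powerIndicator m n * f p +
        ∑ d ∈ n.divisors, (lambdaM m d : R) * f d.minFac := by
  have hcop : p.Coprime n := hp.coprime_of_lt_of_dvd hpn
  have hpow : ∑ i ∈ range a, (lambdaM m (p ^ (i + 1)) : R) = powerIndicator m (p ^ a) - 1 := by
    rw [← Int.cast_sum, sum_range_lambdaM_prime_pow_succ hm hp, Int.cast_sub, Int.cast_one]
  have hn : ∑ y ∈ n.divisors, (lambdaM m y : R) = powerIndicator m n := by
    rw [← Int.cast_sum, sum_divisors_lambdaM hm]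
  calc ∑ d ∈ (p ^ a * n).divisors, (lambdaM m d : R) * f d.minFac
      = ∑ i ∈ range (a + 1), ∑ y ∈ n.divisors,
          (lambdaM m (p ^ i * y) : R) * f (p ^ i * y).minFac := by
        rw [(hcop.pow_left a).sum_divisors_mul_eq, Nat.sum_divisors_prime_pow hp]
    _ = ∑ i ∈ range a, ∑ y ∈ n.divisors, (lambdaM m (p ^ (i + 1)) : R) * lambdaM m y * f p +
        ∑ y ∈ n.divisors, (lambdaM m y : R) * f y.minFac := by
        rw [sum_range_succ']
        simp only [pow_zero, one_mul]
        refine congrArg (· + _) (sum_congr rfl fun i _ => sum_congr rfl fun y hy => ?_)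
        have hy : y ∣ n := Nat.dvd_of_mem_divisors hy
        rw [lambdaM_mul_of_coprime hm ((hcop.pow_left _).coprime_dvd_right hy), Int.cast_mul,
          Nat.minFac_prime_pow_mul hp i.succ_ne_zero fun q hq hqy => (hpn q hq (hqy.trans hy)).le]
    _ = _ := by
        rw [← hpow, ← hn, sum_mul_sum, sum_mul]
        simp_rw [sum_mul]

def nonPowerPrimeFactors (m n : ℕ) : Finset ℕ :=
  n.primeFactors.filter fun p => ¬ m ∣ n.factorization p

theorem Pm_eq_unbotD_max (m n : ℕ) : Pm m n = WithBot.unbotD 1 (nonPowerPrimeFactors m n).max :=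
  rfl

theorem mem_nonPowerPrimeFactors {m n p : ℕ} :
    p ∈ nonPowerPrimeFactors m n ↔ ¬ m ∣ n.factorization p := by
  rw [nonPowerPrimeFactors, mem_filter, ← Nat.support_factorization, Finsupp.mem_support_iff]
  exact and_iff_right_of_imp fun h h0 => h (h0 ▸ dvd_zero m)

theorem nonPowerPrimeFactors_eq_empty_iff {m n : ℕ} :
    nonPowerPrimeFactors m n = ∅ ↔ ∀ p, m ∣ n.factorization p := by
  simp [eq_empty_iff_forall_notMem, mem_nonPowerPrimeFactors]

theorem nonPowerPrimeFactors_mul_of_coprime (m : ℕ) {a b : ℕ} (hab : a.Coprime b) :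
    nonPowerPrimeFactors m (a * b) = nonPowerPrimeFactors m a ∪ nonPowerPrimeFactors m b := by
  ext p
  simp only [mem_union, mem_nonPowerPrimeFactors, Nat.factorization_mul_of_coprime hab,
    Finsupp.add_apply]
  rcases hab.factorization_eq_zero_or p with h0 | h0 <;> simp [h0]

theorem nonPowerPrimeFactors_prime_pow (m : ℕ) {p : ℕ} (hp : p.Prime) (a : ℕ) :
    nonPowerPrimeFactors m (p ^ a) = if m ∣ a then ∅ else {p} := by
  ext q
  simp only [mem_nonPowerPrimeFactors, hp.factorization_pow, Finsupp.single_apply]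
  split_ifs <;> simp_all [eq_comm]

theorem Pm_eq_max_one_sup (m n : ℕ) : Pm m n = max 1 ((nonPowerPrimeFactors m n).sup id) := by
  rw [Pm_eq_unbotD_max]
  rcases (nonPowerPrimeFactors m n).eq_empty_or_nonempty with h | h
  · simp [h]
  · rw [← coe_max' h, WithBot.unbotD_coe, ← sup'_eq_sup h, ← max'_eq_sup', eq_comm,
      max_eq_right]
    exact (Nat.prime_of_mem_primeFactors (filter_subset _ _ (max'_mem _ h))).one_le

theorem one_le_Pm (m n : ℕ) : 1 ≤ Pm m n :=
  (Pm_eq_max_one_sup m n).symm ▸ le_max_left _ _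

theorem Pm_mul_of_coprime (m : ℕ) {a b : ℕ} (hab : a.Coprime b) :
    Pm m (a * b) = max (Pm m a) (Pm m b) := by
  simp only [Pm_eq_max_one_sup, nonPowerPrimeFactors_mul_of_coprime m hab, sup_union]
  omega

theorem Pm_prime_pow (m : ℕ) {p : ℕ} (hp : p.Prime) (a : ℕ) :
    Pm m (p ^ a) = if m ∣ a then 1 else p := by
  rw [Pm_eq_unbotD_max, nonPowerPrimeFactors_prime_pow m hp]
  split_ifs <;> simp

theorem Pm_mem_nonPowerPrimeFactors {m n : ℕ} (h : (nonPowerPrimeFactors m n).Nonempty) :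
    Pm m n ∈ nonPowerPrimeFactors m n := by
  rw [Pm_eq_unbotD_max, ← coe_max' h, WithBot.unbotD_coe]
  exact max'_mem _ h

theorem Pm_eq_one_iff {m n : ℕ} : Pm m n = 1 ↔ ∀ p, m ∣ n.factorization p := by
  rw [← nonPowerPrimeFactors_eq_empty_iff]
  refine ⟨fun h1 => by_contra fun hne => ?_, fun h => by rw [Pm_eq_unbotD_max, h]; rfl⟩
  have hmem := filter_subset _ _ (Pm_mem_nonPowerPrimeFactors (nonempty_iff_ne_empty.2 hne))
  exact Nat.not_prime_one (h1 ▸ Nat.prime_of_mem_primeFactors hmem)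

theorem Pm_mem_primeFactors {m n : ℕ} (h : Pm m n ≠ 1) : Pm m n ∈ n.primeFactors :=
  filter_subset _ _ <| Pm_mem_nonPowerPrimeFactors <| nonempty_iff_ne_empty.2 fun he =>
    h (Pm_eq_one_iff.2 (nonPowerPrimeFactors_eq_empty_iff.1 he))

theorem powerIndicator_eq_ite_Pm_eq_one (m : ℕ) {n : ℕ} (hn : n ≠ 0) :
    powerIndicator m n = if Pm m n = 1 then 1 else 0 := by
  classical
  rw [powerIndicator_apply]
  exact if_congr ((and_iff_right hn).trans Pm_eq_one_iff.symm) rfl rfl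

theorem Pm_prime_pow_mul (m : ℕ) {p n : ℕ} (hp : p.Prime) (hpn : ∀ q, q.Prime → q ∣ n → p < q)
    (a : ℕ) : Pm m (p ^ a * n) = if m ∣ a ∨ Pm m n ≠ 1 then Pm m n else p := by
  rw [Pm_mul_of_coprime m ((hp.coprime_of_lt_of_dvd hpn).pow_left a), Pm_prime_pow m hp]
  by_cases hma : m ∣ a
  · simp [hma, one_le_Pm]
  by_cases h1 : Pm m n = 1
  · simp [hma, h1, hp.one_lt.le]
  · have hmem := Pm_mem_primeFactors h1
    have hlt := hpn _ (Nat.prime_of_mem_primeFactors hmem) (Nat.dvd_of_mem_primeFactors hmem)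
    simp [hma, h1, hlt.le]

theorem duality_lemma_general (m : ℕ) (hm : 2 ≤ m) (f : ℕ → ℝ) (hf : f 1 = 0)
    (n : ℕ) :
    ∑ d ∈ n.divisors, (lambdaM m d : ℝ) * f d.minFac = -f (Pm m n) := by
  have hm0 : m ≠ 0 := by omega
  induction n using Nat.strong_induction_on with
  | _ n ih =>
  obtain rfl | rfl | hn : n = 0 ∨ n = 1 ∨ 1 < n := by omega
  · simp [Pm, hf]
  · simp [lambdaM_one, Pm, hf]
  obtain ⟨p, a, n', hp, rfl, hlt, hgt⟩ := Nat.exists_prime_pow_mul_of_one_lt hn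
  have hn' : n' ≠ 0 := fun h => (hgt p hp (h ▸ dvd_zero p)).false
  rw [sum_divisors_lambdaM_mul_minFac_prime_pow_mul hm0 f hp hgt, ih n' hlt,
    Pm_prime_pow_mul m hp hgt, powerIndicator_prime_pow m hp, powerIndicator_eq_ite_Pm_eq_one m hn']
  by_cases hma : m ∣ a <;> by_cases h1 : Pm m n' = 1 <;> simp [hma, h1, hf]

theorem duality_lemma (m : ℕ) (hm : 2 ≤ m) (f : ℕ → ℝ) (hf : f 1 = 0)
    (n : ℕ) (hn : 0 < n) :
    ∑ d ∈ n.divisors, (lambdaM m d : ℝ) * f d.minFac = -f (Pm m n) :=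
  duality_lemma_general m hm f hf n
end

section
/- Let m ≥ 2 be an integer. Let P(n) denote the largest prime divisor of n (with P(1) = 1), and let P_m(n) denote the largest prime p dividing n whose exponent in the prime factorization of n is not divisible by m (with P_m(n) = 1 if n is a perfect m-th power). Then there exist positive constants c and C such that for all x ≥ 3, the number of positive integers n ≤ x with P_m(n) ≠ P(n) is at most C · x · exp(−c · (log x · log log x)^{1/2}). -/
open Finset ArithmeticFunction Real

/-- `Pbig n` is the largest prime factor of `n`, with `Pbig 1 = 1`. -/
def Pbig (n : ℕ) : ℕ :=
  WithBot.unbotD 1 n.primeFactors.max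

/-!
If `Pm m n ≠ Pbig n`, the largest prime factor of `n` occurs with a multiplicity divisible by
`m ≥ 2`, so `Pbig n ^ 2 ∣ n`. Put `w = √(log x · log log x)` and `Y = ⌊e^w⌋`. Such an `n ≤ x`
either is divisible by `k²` for some `k > Y`, which happens for at most `2x/Y` integers, or is
`Y`-smooth. Rankin's trick with the exponent `σ = 1 - δ`, `δ = log log x / (4w)`, bounds the
`Y`-smooth integers up to `x` by
`x^σ ∏_{p ≤ Y} (1 - p^{-σ})⁻¹ ≤ x e^{-w/4} exp (4 Y^δ ∑_{p ≤ Y} 1/p)`.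
Chebyshev's bound `θ(t) ≤ t log 4` on dyadic blocks gives `∑_{p ≤ Y} 1/p ≤ 4 log log Y + 9`,
and since `Y^δ ≤ (log x)^{1/4}`, the last factor is at most `e^{w/8}` once `x` is large.
-/

lemma Pbig_eq_max' {n : ℕ} (h : n.primeFactors.Nonempty) : Pbig n = n.primeFactors.max' h := by
  rw [Pbig, ← Finset.coe_max' h]
  rfl

lemma le_Pbig_of_mem_primeFactors {n p : ℕ} (hp : p ∈ n.primeFactors) : p ≤ Pbig n := by
  rw [Pbig_eq_max' ⟨p, hp⟩]
  exact le_max' _ p hp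

lemma Pbig_sq_dvd_of_Pm_ne {m n : ℕ} (hm : m ≠ 1) (h : Pm m n ≠ Pbig n) : Pbig n ^ 2 ∣ n := by
  rcases n.primeFactors.eq_empty_or_nonempty with hn | hn
  · simp [Pbig, hn]
  set p := n.primeFactors.max' hn
  have hp : p ∈ n.primeFactors := max'_mem _ hn
  have hmp : m ∣ n.factorization p := by
    by_contra hmp
    have hmax : (n.primeFactors.filter fun q ↦ ¬ m ∣ n.factorization q).max = p :=
      le_antisymm ((max_mono (filter_subset _ _)).trans_eq (coe_max' hn).symm)
        (le_max (mem_filter.mpr ⟨hp, hmp⟩))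
    exact h (by rw [Pm, hmax, Pbig_eq_max' hn]; rfl)
  have hpos : n.factorization p ≠ 0 := Finsupp.mem_support_iff.mp hp
  have hm0 : m ≠ 0 := by rintro rfl; exact hpos (zero_dvd_iff.mp hmp)
  rw [Pbig_eq_max' hn, (Nat.prime_of_mem_primeFactors hp).pow_dvd_iff_le_factorization
    (Nat.mem_primeFactors.mp hp).2.2]
  have := Nat.le_of_dvd (Nat.pos_of_ne_zero hpos) hmp
  omega

lemma mem_smoothNumbers_of_Pbig_lt {n k : ℕ} (hn : n ≠ 0) (h : Pbig n < k) :
    n ∈ k.smoothNumbers :=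
  Nat.mem_smoothNumbers_of_primeFactors_subset hn fun _ hp ↦
    mem_range.mpr ((le_Pbig_of_mem_primeFactors hp).trans_lt h)

lemma card_filter_Pbig_sq_dvd_le (N Y : ℕ) :
    #{n ∈ Icc 1 N | Pbig n ^ 2 ∣ n} ≤
      #{n ∈ Icc 1 N | ∃ k ∈ Ioc Y N, k ^ 2 ∣ n} + #(Nat.smoothNumbersUpTo N (Y + 1)) := by
  refine (card_le_card fun n hn ↦ ?_).trans (card_union_le _ _)
  obtain ⟨hnN, hsq⟩ := mem_filter.mp hn
  obtain ⟨hn1, hnN'⟩ := mem_Icc.mp hnN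
  rcases lt_or_ge Y (Pbig n) with hY | hY
  · have hPn : Pbig n ≤ n := (Nat.le_self_pow two_ne_zero _).trans (Nat.le_of_dvd hn1 hsq)
    exact mem_union_left _ (mem_filter.mpr ⟨hnN, Pbig n, mem_Ioc.mpr ⟨hY, hPn.trans hnN'⟩, hsq⟩)
  · exact mem_union_right _ (Nat.mem_smoothNumbersUpTo.mpr
      ⟨hnN', mem_smoothNumbers_of_Pbig_lt (by omega) (Nat.lt_succ_of_le hY)⟩)

lemma card_filter_exists_sq_dvd_le (N Y : ℕ) :
    (#{n ∈ Icc 1 N | ∃ k ∈ Ioc Y N, k ^ 2 ∣ n} : ℝ) ≤ 2 * N / (Y + 1) := by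
  have hsub : {n ∈ Icc 1 N | ∃ k ∈ Ioc Y N, k ^ 2 ∣ n} ⊆
      (Ioc Y N).biUnion fun k ↦ {n ∈ Ioc 0 N | k ^ 2 ∣ n} := by
    intro n hn
    obtain ⟨hnN, k, hk, hkn⟩ := mem_filter.mp hn
    exact mem_biUnion.mpr ⟨k, hk, mem_filter.mpr ⟨hnN, hkn⟩⟩
  calc (#{n ∈ Icc 1 N | ∃ k ∈ Ioc Y N, k ^ 2 ∣ n} : ℝ)
      ≤ ∑ k ∈ Ioc Y N, ((N / k ^ 2 : ℕ) : ℝ) := by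
        rw [← Nat.cast_sum]
        simp_rw [← Nat.Ioc_filter_dvd_card_eq_div]
        exact_mod_cast (card_le_card hsub).trans card_biUnion_le
    _ ≤ ∑ k ∈ Ioc Y N, (N : ℝ) * ((k : ℝ) ^ 2)⁻¹ := by
        gcongr with k
        exact Nat.cast_div_le.trans_eq (by push_cast; ring)
    _ ≤ 2 * N / (Y + 1) := by
        rw [← mul_sum, mul_comm 2, mul_div_assoc, ← Ioo_add_one_right_eq_Ioc]
        exact mul_le_mul_of_nonneg_left (sum_Ioo_inv_sq_le Y (N + 1)) (Nat.cast_nonneg N)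

lemma card_smoothNumbersUpTo_le_rpow_mul_prod (N k : ℕ) {σ : ℝ} (hσ : 0 < σ) :
    (#(Nat.smoothNumbersUpTo N k) : ℝ) ≤
      N ^ σ * ∏ p ∈ k.primesBelow, (1 - (p : ℝ) ^ (-σ))⁻¹ := by
  let f : ℕ →* ℝ :=
    { toFun n := (n : ℝ) ^ (-σ)
      map_one' := by simp
      map_mul' a b := by push_cast; exact mul_rpow (Nat.cast_nonneg a) (Nat.cast_nonneg b) }
  have hf : ∀ {p : ℕ}, p.Prime → ‖f p‖ < 1 := fun {p} hp ↦ by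
    change ‖(p : ℝ) ^ (-σ)‖ < 1
    rw [norm_of_nonneg (rpow_nonneg (Nat.cast_nonneg p) _)]
    exact rpow_lt_one_of_one_lt_of_neg (mod_cast hp.one_lt) (neg_lt_zero.mpr hσ)
  have hsum := (EulerProduct.summable_and_hasSum_smoothNumbers_prod_primesBelow_geometric hf k).2
  set S := Nat.smoothNumbersUpTo N k
  have hS : ∀ n ∈ S, n ∈ k.smoothNumbers := fun n hn ↦ (Nat.mem_smoothNumbersUpTo.mp hn).2
  have hterm : ∀ n ∈ S, (1 : ℝ) ≤ N ^ σ * (n : ℝ) ^ (-σ) := fun n hn ↦ by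
    have hn0 : (0 : ℝ) < n :=
      mod_cast Nat.pos_of_ne_zero (Nat.ne_zero_of_mem_smoothNumbers (hS n hn))
    have hnN : (n : ℝ) ≤ N := mod_cast (Nat.mem_smoothNumbersUpTo.mp hn).1
    rw [rpow_neg hn0.le, ← div_eq_mul_inv, one_le_div (by positivity)]
    exact rpow_le_rpow hn0.le hnN hσ.le
  calc (#S : ℝ) = ∑ _n ∈ S, (1 : ℝ) := by simp
    _ ≤ ∑ n ∈ S, (N : ℝ) ^ σ * (n : ℝ) ^ (-σ) := sum_le_sum hterm
    _ = N ^ σ * ∑ n ∈ S.subtype (· ∈ k.smoothNumbers), f n := by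
        rw [← mul_sum, sum_subtype_of_mem (fun n ↦ f n) hS]
        rfl
    _ ≤ _ := by
        gcongr
        exact sum_le_hasSum _ (fun n _ ↦ rpow_nonneg (Nat.cast_nonneg n) _) hsum

lemma inv_one_sub_le_exp_four_mul {t : ℝ} (ht0 : 0 ≤ t) (ht : t ≤ 3 / 4) :
    (1 - t)⁻¹ ≤ exp (4 * t) := by
  have h1t : 0 < 1 - t := by linarith
  calc (1 - t)⁻¹ ≤ 1 + 4 * t := by
        rw [inv_le_iff_one_le_mul₀ h1t]
        nlinarith
    _ ≤ exp (4 * t) := by linarith [add_one_le_exp (4 * t)]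

lemma rpow_neg_le_three_quarters {p : ℕ} (hp : 2 ≤ p) {σ : ℝ} (hσ : 1 / 2 ≤ σ) :
    (p : ℝ) ^ (-σ) ≤ 3 / 4 :=
  calc (p : ℝ) ^ (-σ) ≤ (p : ℝ) ^ (-(1 / 2 : ℝ)) :=
        rpow_le_rpow_of_exponent_le (mod_cast (one_le_two.trans hp)) (neg_le_neg hσ)
    _ ≤ 3 / 4 := by
        rw [rpow_neg (Nat.cast_nonneg p), ← sqrt_eq_rpow,
          inv_le_comm₀ (by positivity) (by norm_num), le_sqrt (by norm_num) (Nat.cast_nonneg p)]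
        have : (2 : ℝ) ≤ p := mod_cast hp
        linarith

lemma prod_primesBelow_inv_one_sub_rpow_le_exp (k : ℕ) {σ : ℝ} (hσ : 1 / 2 ≤ σ) :
    ∏ p ∈ k.primesBelow, (1 - (p : ℝ) ^ (-σ))⁻¹ ≤
      exp (4 * ∑ p ∈ k.primesBelow, (p : ℝ) ^ (-σ)) := by
  have hle : ∀ p ∈ k.primesBelow, (p : ℝ) ^ (-σ) ≤ 3 / 4 := fun p hp ↦
    rpow_neg_le_three_quarters (Nat.prime_of_mem_primesBelow hp).two_le hσ
  rw [mul_sum, exp_sum]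
  refine prod_le_prod (fun p hp ↦ inv_nonneg.mpr (by linarith [hle p hp])) fun p hp ↦
    inv_one_sub_le_exp_four_mul (rpow_nonneg (Nat.cast_nonneg p) _) (hle p hp)

lemma sum_inv_primesLE_sdiff_le {A : ℕ} (hA : 2 ≤ A) (B : ℕ) :
    ∑ p ∈ B.primesLE \ A.primesLE, (p : ℝ)⁻¹ ≤ Real.log 4 * B / (A * Real.log A) := by
  have hA0 : (0 : ℝ) < A := by positivity
  have hlogA : 0 < Real.log A := Real.log_pos (by exact_mod_cast hA)
  have hterm : ∀ p ∈ B.primesLE \ A.primesLE, (p : ℝ)⁻¹ ≤ Real.log p / (A * Real.log A) := by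
    intro p hp
    obtain ⟨hpB, hpA⟩ := mem_sdiff.mp hp
    have hpp := Nat.prime_of_mem_primesBelow hpB
    have hAp : (A : ℝ) < p := by
      by_contra! h
      exact hpA (Nat.mem_primesBelow.mpr ⟨Nat.lt_succ_of_le (mod_cast h), hpp⟩)
    rw [le_div_iff₀ (by positivity), inv_mul_le_iff₀ (hA0.trans hAp)]
    exact mul_le_mul hAp.le (Real.log_le_log hA0 hAp.le) hlogA.le (by positivity)
  calc ∑ p ∈ B.primesLE \ A.primesLE, (p : ℝ)⁻¹
      ≤ ∑ p ∈ B.primesLE, Real.log p / (A * Real.log A) := by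
        refine (sum_le_sum hterm).trans (sum_le_sum_of_subset_of_nonneg sdiff_subset fun p _ _ ↦ ?_)
        exact div_nonneg (Real.log_natCast_nonneg p) (by positivity)
    _ = Chebyshev.theta B / (A * Real.log A) := by
        rw [← sum_div, Chebyshev.theta_eq_sum_primesLE_log]
    _ ≤ Real.log 4 * B / (A * Real.log A) := by
        gcongr
        exact Chebyshev.theta_le_log4_mul_x (Nat.cast_nonneg B)

lemma sum_inv_primesLE_two_pow_le (K : ℕ) :
    ∑ p ∈ Nat.primesLE (2 ^ (K + 1)), (p : ℝ)⁻¹ ≤ 1 / 2 + 4 * harmonic K := by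
  induction K with
  | zero => simp [show Nat.primesLE 2 = {2} by decide]
  | succ K ih =>
    have hsub : Nat.primesLE (2 ^ (K + 1)) ⊆ Nat.primesLE (2 ^ (K + 2)) :=
      Nat.primesBelow_mono (by gcongr <;> omega)
    have hblock := sum_inv_primesLE_sdiff_le (A := 2 ^ (K + 1)) (Nat.le_self_pow K.succ_ne_zero 2)
      (2 ^ (K + 2))
    have hbound : Real.log 4 * ((2 ^ (K + 2) : ℕ) : ℝ) /
        (((2 ^ (K + 1) : ℕ) : ℝ) * Real.log ((2 ^ (K + 1) : ℕ) : ℝ)) = 4 * ((K : ℝ) + 1)⁻¹ := by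
      rw [show (4 : ℝ) = 2 ^ 2 by norm_num]
      push_cast
      rw [Real.log_pow, Real.log_pow]
      field_simp
      push_cast
      ring
    rw [hbound] at hblock
    rw [← sum_sdiff hsub, harmonic_succ]
    push_cast
    linarith

lemma sum_inv_primesLE_le {Y : ℕ} (hY : 2 ≤ Y) :
    ∑ p ∈ Y.primesLE, (p : ℝ)⁻¹ ≤ 4 * Real.log (Real.log Y) + 9 := by
  set K := Nat.log 2 Y
  have hK : 1 ≤ K := Nat.log_pos one_lt_two hY
  have hYK : Y < 2 ^ (K + 1) := Nat.lt_pow_succ_log_self one_lt_two Y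
  have hKY : (K : ℝ) * Real.log 2 ≤ Real.log Y := by
    rw [← Real.log_pow]
    exact Real.log_le_log (by positivity) (mod_cast Nat.pow_log_le_self 2 (by omega))
  have hlog2 := Real.log_two_gt_d9
  have hlog2' := Real.log_two_lt_d9
  have hlogK : Real.log K ≤ 1 + Real.log (Real.log Y) := by
    have hK0 : (0 : ℝ) < K := by exact_mod_cast hK
    calc Real.log K ≤ Real.log (2 * Real.log Y) := Real.log_le_log hK0 (by nlinarith)
      _ = Real.log 2 + Real.log (Real.log Y) := Real.log_mul two_ne_zero (by nlinarith)
      _ ≤ 1 + Real.log (Real.log Y) := by linarith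
  calc ∑ p ∈ Y.primesLE, (p : ℝ)⁻¹ ≤ ∑ p ∈ Nat.primesLE (2 ^ (K + 1)), (p : ℝ)⁻¹ :=
        sum_le_sum_of_subset_of_nonneg (Nat.primesBelow_mono (by omega)) fun p _ _ ↦ by positivity
    _ ≤ 1 / 2 + 4 * harmonic K := sum_inv_primesLE_two_pow_le K
    _ ≤ 1 / 2 + 4 * (1 + Real.log K) := by gcongr; exact harmonic_le_one_add_log K
    _ ≤ 4 * Real.log (Real.log Y) + 9 := by linarith

lemma card_smoothNumbersUpTo_le_exp (N : ℕ) {Y : ℕ} (hY : 2 ≤ Y) {δ : ℝ} (hδ0 : 0 ≤ δ)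
    (hδ : δ ≤ 1 / 2) :
    (#(Nat.smoothNumbersUpTo N (Y + 1)) : ℝ) ≤
      N ^ (1 - δ) * exp (4 * (Y ^ δ * (4 * Real.log (Real.log Y) + 9))) := by
  have hsum : ∑ p ∈ Y.primesLE, (p : ℝ) ^ (-(1 - δ)) ≤ Y ^ δ * (4 * Real.log (Real.log Y) + 9) := by
    calc ∑ p ∈ Y.primesLE, (p : ℝ) ^ (-(1 - δ)) ≤ ∑ p ∈ Y.primesLE, (Y : ℝ) ^ δ * (p : ℝ)⁻¹ := by
          refine sum_le_sum fun p hp ↦ ?_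
          have hp0 : (0 : ℝ) < p := mod_cast (Nat.prime_of_mem_primesBelow hp).pos
          rw [show -(1 - δ) = δ + -1 by ring, rpow_add hp0, rpow_neg_one]
          gcongr
          exact mod_cast Nat.lt_succ_iff.mp (Nat.lt_of_mem_primesBelow hp)
      _ ≤ Y ^ δ * (4 * Real.log (Real.log Y) + 9) := by
          rw [← mul_sum]
          gcongr
          exact sum_inv_primesLE_le hY
  calc (#(Nat.smoothNumbersUpTo N (Y + 1)) : ℝ)
      ≤ N ^ (1 - δ) * ∏ p ∈ Y.primesLE, (1 - (p : ℝ) ^ (-(1 - δ)))⁻¹ :=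
        card_smoothNumbersUpTo_le_rpow_mul_prod N (Y + 1) (by linarith)
    _ ≤ N ^ (1 - δ) * exp (4 * ∑ p ∈ Y.primesLE, (p : ℝ) ^ (-(1 - δ))) := by
        gcongr
        exact prod_primesBelow_inv_one_sub_rpow_le_exp (Y + 1) (by linarith)
    _ ≤ _ := by gcongr

lemma sqrt_mul_log_le_self {L : ℝ} (hL : 1 ≤ L) : √(L * Real.log L) ≤ L := by
  calc √(L * Real.log L) ≤ √(L * L) :=
        Real.sqrt_le_sqrt (by gcongr; exact Real.log_le_self (by linarith))
    _ = L := Real.sqrt_mul_self (by linarith)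

lemma log_le_sqrt_mul_log {L : ℝ} (hL : 1 ≤ L) : Real.log L ≤ √(L * Real.log L) := by
  have hlog := Real.log_nonneg hL
  calc Real.log L = √(Real.log L * Real.log L) := (Real.sqrt_mul_self hlog).symm
    _ ≤ √(L * Real.log L) := Real.sqrt_le_sqrt (by gcongr; exact Real.log_le_self (by linarith))

lemma exp_half_log_le_sqrt_mul_log {L : ℝ} (hL : exp 1 ≤ L) :
    exp (Real.log L / 2) ≤ √(L * Real.log L) := by
  have hL0 : 0 < L := (exp_pos 1).trans_le hL
  have hlog : 1 ≤ Real.log L := by rwa [Real.le_log_iff_exp_le hL0]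
  rw [exp_half, exp_log hL0]
  exact Real.sqrt_le_sqrt (le_mul_of_one_le_right hL0.le hlog)

lemma four_mul_rpow_mul_le {M w : ℝ} {Y : ℕ} (hM : 4100 ≤ M) (hMw : exp (M / 2) ≤ w)
    (hwM : w ≤ exp M) (hY : 2 ≤ Y) (hYw : Y ≤ exp w) :
    4 * (Y ^ (M / (4 * w)) * (4 * Real.log (Real.log Y) + 9)) ≤ w / 8 := by
  have hw0 : 0 < w := (exp_pos _).trans_le hMw
  have hloglogY : Real.log (Real.log Y) ≤ M := by
    have hlogY : 0 < Real.log Y := Real.log_pos (by exact_mod_cast hY)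
    have hlogYw : Real.log Y ≤ w := (Real.log_le_log (by positivity) hYw).trans_eq (log_exp w)
    rw [← Real.log_exp M]
    exact Real.log_le_log hlogY (hlogYw.trans hwM)
  have hYδ : (Y : ℝ) ^ (M / (4 * w)) ≤ exp (M / 4) :=
    calc (Y : ℝ) ^ (M / (4 * w)) ≤ exp w ^ (M / (4 * w)) := by gcongr
      _ = exp (M / 4) := by rw [← exp_mul]; congr 1; field_simp
  -- `log (log Y)` may be negative; the sum it bounds is not.
  have hloglogY0 : 0 ≤ 4 * Real.log (Real.log Y) + 9 :=
    (sum_nonneg fun p _ ↦ by positivity).trans (sum_inv_primesLE_le hY)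
  -- The threshold `4100` is where `exp u ≥ u ^ 2 / 2` at `u = M / 4` beats `32 * (4 * M + 9)`.
  have hpoly : 32 * (4 * M + 9) ≤ exp (M / 4) := by
    nlinarith [quadratic_le_exp_of_nonneg (x := M / 4) (by linarith)]
  have hsq : exp (M / 2) = exp (M / 4) * exp (M / 4) := by rw [← exp_add]; ring_nf
  calc 4 * (Y ^ (M / (4 * w)) * (4 * Real.log (Real.log Y) + 9))
      ≤ 4 * (exp (M / 4) * (4 * M + 9)) := by gcongr
    _ ≤ w / 8 := by nlinarith [exp_pos (M / 4)]

lemma card_smoothNumbersUpTo_floor_le {x : ℝ} (hx : exp (exp 4100) ≤ x) :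
    (#(Nat.smoothNumbersUpTo ⌊x⌋₊ (⌊exp √(Real.log x * Real.log (Real.log x))⌋₊ + 1)) : ℝ) ≤
      x * exp (-(√(Real.log x * Real.log (Real.log x)) / 8)) := by
  have hx0 : 0 < x := (exp_pos _).trans_le hx
  set L := Real.log x
  set M := Real.log L
  set w := √(L * M)
  have hL : exp 4100 ≤ L := by rw [Real.le_log_iff_exp_le hx0]; exact hx
  have hL0 : 0 < L := (exp_pos _).trans_le hL
  have hM : 4100 ≤ M := by rw [Real.le_log_iff_exp_le hL0]; exact hL
  have hL1 : exp 1 ≤ L := (exp_le_exp.mpr (by norm_num)).trans hL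
  have hwM : M ≤ w := log_le_sqrt_mul_log ((one_le_exp zero_le_one).trans hL1)
  have hw0 : 0 < w := by linarith
  set Y := ⌊exp w⌋₊
  set δ := M / (4 * w)
  have hY : 2 ≤ Y := Nat.le_floor (by push_cast; linarith [add_one_le_exp w])
  have hδ : δ ≤ 1 / 2 := by rw [div_le_iff₀ (by positivity)]; linarith
  have hδL : δ * L = w / 4 := by
    have hww : w * w = L * M := Real.mul_self_sqrt (by positivity)
    calc δ * L = w * w / (4 * w) := by rw [hww]; ring
      _ = w / 4 := by field_simp
  have hexponent : 4 * ((Y : ℝ) ^ δ * (4 * Real.log (Real.log Y) + 9)) ≤ w / 8 :=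
    four_mul_rpow_mul_le hM (exp_half_log_le_sqrt_mul_log hL1)
      ((sqrt_mul_log_le_self ((one_le_exp zero_le_one).trans hL1)).trans_eq (exp_log hL0).symm)
      hY (Nat.floor_le (exp_pos w).le)
  calc (#(Nat.smoothNumbersUpTo ⌊x⌋₊ (Y + 1)) : ℝ)
      ≤ (⌊x⌋₊ : ℝ) ^ (1 - δ) * exp (4 * (Y ^ δ * (4 * Real.log (Real.log Y) + 9))) :=
        card_smoothNumbersUpTo_le_exp ⌊x⌋₊ hY (by positivity) hδ
    _ ≤ x ^ (1 - δ) * exp (w / 8) := by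
        gcongr
        · linarith
        · exact Nat.floor_le hx0.le
    _ = x * exp (-(w / 8)) := by
        rw [rpow_def_of_pos hx0, ← exp_add, show L * (1 - δ) + w / 8 = L + -(w / 8) by linarith,
          exp_add, exp_log hx0]

lemma card_filter_Pbig_sq_dvd_le_of_large {x : ℝ} (hx : exp (exp 4100) ≤ x) :
    (#{n ∈ Icc 1 ⌊x⌋₊ | Pbig n ^ 2 ∣ n} : ℝ) ≤
      3 * x * exp (-(√(Real.log x * Real.log (Real.log x)) / 8)) := by
  set w := √(Real.log x * Real.log (Real.log x))
  have hx0 : 0 < x := (exp_pos _).trans_le hx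
  set Y := ⌊exp w⌋₊
  have hrough : (#{n ∈ Icc 1 ⌊x⌋₊ | ∃ k ∈ Ioc Y ⌊x⌋₊, k ^ 2 ∣ n} : ℝ) ≤ 2 * x * exp (-(w / 8)) :=
    calc (#{n ∈ Icc 1 ⌊x⌋₊ | ∃ k ∈ Ioc Y ⌊x⌋₊, k ^ 2 ∣ n} : ℝ) ≤ 2 * ⌊x⌋₊ / (Y + 1) :=
          card_filter_exists_sq_dvd_le _ _
      _ ≤ 2 * x / exp w := by
          gcongr
          exacts [Nat.floor_le hx0.le, (Nat.lt_floor_add_one _).le]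
      _ ≤ 2 * x * exp (-(w / 8)) := by
          rw [div_eq_mul_inv, ← exp_neg]
          gcongr
          linarith [Real.sqrt_nonneg (Real.log x * Real.log (Real.log x))]
  calc (#{n ∈ Icc 1 ⌊x⌋₊ | Pbig n ^ 2 ∣ n} : ℝ)
      ≤ #{n ∈ Icc 1 ⌊x⌋₊ | ∃ k ∈ Ioc Y ⌊x⌋₊, k ^ 2 ∣ n} + #(Nat.smoothNumbersUpTo ⌊x⌋₊ (Y + 1)) :=
        mod_cast card_filter_Pbig_sq_dvd_le _ Y
    _ ≤ 2 * x * exp (-(w / 8)) + x * exp (-(w / 8)) :=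
        add_le_add hrough (card_smoothNumbersUpTo_floor_le hx)
    _ = 3 * x * exp (-(w / 8)) := by ring

lemma le_mul_mul_exp_neg_sqrt_log_mul_log_log {x C : ℝ} (hx : 3 ≤ x) (hxC : x ≤ C) :
    x ≤ C * x * exp (-(√(Real.log x * Real.log (Real.log x)) / 8)) := by
  have hx0 : 0 < x := by linarith
  have hlogx : 1 ≤ Real.log x := by
    rw [Real.le_log_iff_exp_le hx0]
    linarith [exp_one_lt_d9]
  set w := √(Real.log x * Real.log (Real.log x))
  have hw : w / 8 ≤ Real.log x := by
    linarith [sqrt_mul_log_le_self hlogx, Real.sqrt_nonneg (Real.log x * Real.log (Real.log x))]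
  calc x = exp (w / 8) * x * exp (-(w / 8)) := by
        rw [mul_comm (exp _), mul_assoc, ← exp_add, add_neg_cancel, exp_zero, mul_one]
    _ ≤ C * x * exp (-(w / 8)) := by
        gcongr
        exact (exp_le_exp.mpr hw).trans ((exp_log hx0).trans_le hxC)

theorem count_Pm_ne_Pbig (m : ℕ) (hm : 2 ≤ m) :
    ∃ c C : ℝ, 0 < c ∧ 0 < C ∧ ∀ x : ℝ, 3 ≤ x →
      (((Finset.Icc 1 ⌊x⌋₊).filter (fun n => Pm m n ≠ Pbig n)).card : ℝ)
        ≤ C * x * Real.exp (-c * Real.sqrt (Real.log x * Real.log (Real.log x))) := by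
  refine ⟨1 / 8, exp (exp 4100), by norm_num, exp_pos _, fun x hx ↦ ?_⟩
  set w := √(Real.log x * Real.log (Real.log x))
  have hPm : #{n ∈ Icc 1 ⌊x⌋₊ | Pm m n ≠ Pbig n} ≤ #{n ∈ Icc 1 ⌊x⌋₊ | Pbig n ^ 2 ∣ n} :=
    card_le_card (monotone_filter_right _ fun _ _ ↦ Pbig_sq_dvd_of_Pm_ne (by omega))
  rw [show -(1 / 8) * w = -(w / 8) by ring]
  rcases le_or_gt (exp (exp 4100)) x with hlarge | hsmall
  · have hC : (3 : ℝ) ≤ exp (exp 4100) := by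
      linarith [add_one_le_exp (exp 4100), add_one_le_exp (4100 : ℝ)]
    calc (#{n ∈ Icc 1 ⌊x⌋₊ | Pm m n ≠ Pbig n} : ℝ) ≤ #{n ∈ Icc 1 ⌊x⌋₊ | Pbig n ^ 2 ∣ n} :=
          mod_cast hPm
      _ ≤ 3 * x * exp (-(w / 8)) := card_filter_Pbig_sq_dvd_le_of_large hlarge
      _ ≤ exp (exp 4100) * x * exp (-(w / 8)) := by gcongr
  · calc (#{n ∈ Icc 1 ⌊x⌋₊ | Pm m n ≠ Pbig n} : ℝ) ≤ ⌊x⌋₊ := by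
          exact_mod_cast (card_filter_le _ _).trans (by simp)
      _ ≤ x := Nat.floor_le (by linarith)
      _ ≤ exp (exp 4100) * x * exp (-(w / 8)) :=
          le_mul_mul_exp_neg_sqrt_log_mul_log_log hx hsmall.le
end
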